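/- Let θ be an irrational number in (0,1) with continued fraction convergents p_n/q_n. Then for any integers n ≥ 1, ℓ ≥ 0, and 1 ≤ r ≤ q_{n+1} - 1, one has ⌊(q_{n+ℓ} + q_{n+ℓ-1} + ... + q_n + r)θ⌋ = p_{n+ℓ} + p_{n+ℓ-1} + ... + p_n + ⌊rθ⌋. -/

import Mathlib

/-- The Gauss-map iterates of `θ`: `cfTheta θ 0 = θ` and
`cfTheta θ (n+1) = {1 / cfTheta θ n}` (fractional part), so that
`θ = [0; a₁, a₂, ...]` with `aₙ = ⌊1 / cfTheta θ (n-1)⌋`. -/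
noncomputable def cfTheta (θ : ℝ) : ℕ → ℝ
  | 0 => θ
  | n + 1 => Int.fract (1 / cfTheta θ n)

/-- The `n`-th partial quotient `aₙ` (for `n ≥ 1`) of the continued fraction
expansion `θ = [0; a₁, a₂, ...]` of `θ ∈ (0,1)`. -/
noncomputable def cfA (θ : ℝ) (n : ℕ) : ℤ := ⌊1 / cfTheta θ (n - 1)⌋

/-- Numerators `pₙ` of the convergents of `θ = [0; a₁, a₂, ...]`:
`p₋₁ = 1`, `p₀ = 0`, `p_{n+1} = a_{n+1} pₙ + p_{n-1}`. -/
noncomputable def cfP (θ : ℝ) : ℕ → ℤ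
  | 0 => 0
  | 1 => 1
  | n + 2 => cfA θ (n + 2) * cfP θ (n + 1) + cfP θ n

/-- Denominators `qₙ` of the convergents of `θ = [0; a₁, a₂, ...]`:
`q₋₁ = 0`, `q₀ = 1`, `q_{n+1} = a_{n+1} qₙ + q_{n-1}`. -/
noncomputable def cfQ (θ : ℝ) : ℕ → ℤ
  | 0 => 1
  | 1 => cfA θ 1
  | n + 2 => cfA θ (n + 2) * cfQ θ (n + 1) + cfQ θ n

/-!
Write `δₘ = qₘθ - pₘ`. Since `(qₘ + r)θ = pₘ + (rθ + δₘ)`, the identity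
`⌊(qₘ + r)θ⌋ = pₘ + ⌊rθ⌋` for `1 ≤ r < qₘ₊₁` says that the shift by `δₘ` does not move `rθ`
past an integer. This holds because `qₘ` is a best approximation denominator: every
`rθ - s` with `1 ≤ r < qₘ₊₁` is an integer combination `x δₘ + y δₘ₊₁` with `x ≠ 0` and
`xy ≤ 0`, and `δₘ₊₁ = -θₘ₊₁ δₘ` (with `θₘ₊₁ > 0` the Gauss iterate) has the opposite sign
to `δₘ`, so `|δₘ| ≤ |rθ - s|`; irrationality of `θ` excludes landing exactly on an integer.
The theorem follows by peeling off `q_{n+ℓ}, …, qₙ` one at a time, using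
`qₙ + ⋯ + q_{n+k-1} + q_{n+1} ≤ q_{n+k+1}` to stay in the admissible range of `r`.
-/

lemma cfTheta_succ (θ : ℝ) (n : ℕ) :
    cfTheta θ (n + 1) = 1 / cfTheta θ n - cfA θ (n + 1) :=
  (Int.self_sub_floor _).symm

lemma irrational_cfTheta_and_mem_Ioo {θ : ℝ} (hθ : Irrational θ)
    (hθ01 : θ ∈ Set.Ioo (0 : ℝ) 1) (n : ℕ) :
    Irrational (cfTheta θ n) ∧ cfTheta θ n ∈ Set.Ioo (0 : ℝ) 1 := by
  induction n with
  | zero => exact ⟨hθ, hθ01⟩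
  | succ n ih =>
    have hirr : Irrational (cfTheta θ (n + 1)) := by
      rw [cfTheta_succ, one_div]
      exact ih.1.inv.sub_intCast _
    exact ⟨hirr, (Int.fract_nonneg _).lt_of_ne hirr.ne_zero.symm, Int.fract_lt_one _⟩

lemma cfTheta_pos {θ : ℝ} (hθ : Irrational θ) (hθ01 : θ ∈ Set.Ioo (0 : ℝ) 1) (n : ℕ) :
    0 < cfTheta θ n :=
  (irrational_cfTheta_and_mem_Ioo hθ hθ01 n).2.1

lemma one_le_cfA {θ : ℝ} (hθ : Irrational θ) (hθ01 : θ ∈ Set.Ioo (0 : ℝ) 1) (n : ℕ) :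
    1 ≤ cfA θ (n + 1) := by
  obtain ⟨-, h0, h1⟩ := irrational_cfTheta_and_mem_Ioo hθ hθ01 n
  exact Int.le_floor.mpr (by exact_mod_cast one_le_one_div h0 h1.le)

lemma one_le_cfQ {θ : ℝ} (hθ : Irrational θ) (hθ01 : θ ∈ Set.Ioo (0 : ℝ) 1) (n : ℕ) :
    1 ≤ cfQ θ n := by
  induction n using Nat.twoStepInduction with
  | zero => exact le_rfl
  | one => exact one_le_cfA hθ hθ01 0
  | more n _ ih =>
    have ha := one_le_cfA hθ hθ01 (n + 1)
    show 1 ≤ cfA θ (n + 2) * cfQ θ (n + 1) + cfQ θ n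
    nlinarith

lemma cfQ_add_cfQ_succ_le {θ : ℝ} (hθ : Irrational θ) (hθ01 : θ ∈ Set.Ioo (0 : ℝ) 1)
    (n : ℕ) : cfQ θ n + cfQ θ (n + 1) ≤ cfQ θ (n + 2) := by
  have ha := one_le_cfA hθ hθ01 (n + 1)
  have hq := one_le_cfQ hθ hθ01 (n + 1)
  show _ ≤ cfA θ (n + 2) * cfQ θ (n + 1) + cfQ θ n
  nlinarith

lemma cfP_succ_mul_cfQ_sub (θ : ℝ) (n : ℕ) :
    cfP θ (n + 1) * cfQ θ n - cfP θ n * cfQ θ (n + 1) = (-1) ^ n := by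
  induction n with
  | zero => simp [cfP, cfQ]
  | succ n ih =>
    show (cfA θ (n + 2) * cfP θ (n + 1) + cfP θ n) * cfQ θ (n + 1)
      - cfP θ (n + 1) * (cfA θ (n + 2) * cfQ θ (n + 1) + cfQ θ n) = (-1) ^ (n + 1)
    linear_combination (-1 : ℤ) * ih

lemma exists_eq_cfQ_lincomb (θ : ℝ) (n : ℕ) (r s : ℤ) :
    ∃ x y : ℤ, r = x * cfQ θ n + y * cfQ θ (n + 1) ∧ s = x * cfP θ n + y * cfP θ (n + 1) := by
  have hdet := cfP_succ_mul_cfQ_sub θ n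
  have hsq : (-1 : ℤ) ^ n * (-1) ^ n = 1 := by rw [← mul_pow]; norm_num
  refine ⟨(-1) ^ n * (r * cfP θ (n + 1) - s * cfQ θ (n + 1)),
    (-1) ^ n * (s * cfQ θ n - r * cfP θ n), ?_, ?_⟩
  · linear_combination (-(-1) ^ n * r) * hdet - r * hsq
  · linear_combination (-(-1) ^ n * s) * hdet - s * hsq

lemma cfQ_succ_mul_sub_cfP_succ {θ : ℝ} (hθ : Irrational θ) (hθ01 : θ ∈ Set.Ioo (0 : ℝ) 1)
    (n : ℕ) :
    cfQ θ (n + 1) * θ - cfP θ (n + 1) = -cfTheta θ (n + 1) * (cfQ θ n * θ - cfP θ n) := by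
  induction n with
  | zero =>
    have hθ0 : θ ≠ 0 := hθ01.1.ne'
    rw [cfTheta_succ]
    simp only [cfQ, cfP, cfTheta, Int.cast_one, Int.cast_zero]
    field_simp
    ring
  | succ n ih =>
    have hθn : cfTheta θ (n + 1) ≠ 0 := (cfTheta_pos hθ hθ01 (n + 1)).ne'
    rw [cfTheta_succ]
    show (↑(cfA θ (n + 2) * cfQ θ (n + 1) + cfQ θ n) : ℝ) * θ
      - ↑(cfA θ (n + 2) * cfP θ (n + 1) + cfP θ n) = _
    push_cast
    field_simp
    linear_combination ih

lemma cfQ_mul_sub_cfP_mul_succ_nonpos {θ : ℝ} (hθ : Irrational θ)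
    (hθ01 : θ ∈ Set.Ioo (0 : ℝ) 1) (n : ℕ) :
    (cfQ θ n * θ - cfP θ n) * (cfQ θ (n + 1) * θ - cfP θ (n + 1)) ≤ 0 := by
  rw [cfQ_succ_mul_sub_cfP_succ hθ hθ01]
  nlinarith [cfTheta_pos hθ hθ01 (n + 1), sq_nonneg (cfQ θ n * θ - cfP θ n : ℝ)]

lemma ne_zero_and_mul_nonpos_of_mem_Ioo {q q' x y : ℤ} (hq : 0 ≤ q)
    (h0 : 0 < x * q + y * q') (h1 : x * q + y * q' < q') : x ≠ 0 ∧ x * y ≤ 0 := by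
  constructor
  · rintro rfl
    rcases le_or_gt y 0 with hy | hy <;> nlinarith
  · by_contra! hxy
    rcases lt_or_gt_of_ne (left_ne_zero_of_mul hxy.ne') with hx | hx
    · nlinarith [neg_of_mul_pos_right hxy hx.le]
    · nlinarith [pos_of_mul_pos_right hxy hx.le]

lemma abs_le_abs_mul_add_mul {α : Type*} [CommRing α] [LinearOrder α] [IsStrictOrderedRing α]
    {a b : α} {x y : ℤ} (hab : a * b ≤ 0) (hx : x ≠ 0) (hxy : x * y ≤ 0) :
    |a| ≤ |x * a + y * b| := by
  have hsame : 0 ≤ (x * a) * (y * b) := by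
    have : (x * a) * (y * b) = ((x * y : ℤ) : α) * (a * b) := by push_cast; ring
    rw [this]
    exact mul_nonneg_of_nonpos_of_nonpos (by exact_mod_cast hxy) hab
  have hx1 : (1 : α) ≤ |(x : α)| := by exact_mod_cast Int.one_le_abs hx
  rw [(abs_add_eq_add_abs_iff _ _).mpr ((mul_nonneg_iff.mp hsame).imp id id), abs_mul]
  nlinarith [abs_nonneg a, abs_nonneg (y * b : α)]

/-- Best approximation property of the convergent denominators. -/
theorem abs_cfQ_mul_sub_cfP_le {θ : ℝ} (hθ : Irrational θ) (hθ01 : θ ∈ Set.Ioo (0 : ℝ) 1)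
    {n : ℕ} {r : ℤ} (hr1 : 1 ≤ r) (hr2 : r < cfQ θ (n + 1)) (s : ℤ) :
    |cfQ θ n * θ - cfP θ n| ≤ |r * θ - s| := by
  obtain ⟨x, y, rfl, rfl⟩ := exists_eq_cfQ_lincomb θ n r s
  obtain ⟨hx, hxy⟩ :=
    ne_zero_and_mul_nonpos_of_mem_Ioo (zero_le_one.trans (one_le_cfQ hθ hθ01 n)) hr1 hr2
  have hsplit : ((x * cfQ θ n + y * cfQ θ (n + 1) : ℤ) : ℝ) * θ
      - ((x * cfP θ n + y * cfP θ (n + 1) : ℤ) : ℝ)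
      = x * (cfQ θ n * θ - cfP θ n) + y * (cfQ θ (n + 1) * θ - cfP θ (n + 1)) := by
    push_cast; ring
  rw [hsplit]
  exact abs_le_abs_mul_add_mul (cfQ_mul_sub_cfP_mul_succ_nonpos hθ hθ01 n) hx hxy

lemma floor_add_eq_floor_of_abs_le {α : Type*} [CommRing α] [LinearOrder α] [IsStrictOrderedRing α]
    [FloorRing α] {x δ : α} (hδ : ∀ s : ℤ, |δ| ≤ |x - s|) (hne : ∀ s : ℤ, x + δ ≠ s) :
    ⌊x + δ⌋ = ⌊x⌋ := by
  have h₀ := (hδ ⌊x⌋).trans_eq (abs_of_nonneg (sub_nonneg.2 (Int.floor_le x)))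
  have h₁ := (hδ (⌊x⌋ + 1)).trans_eq
    (abs_of_neg (by push_cast; linarith [Int.lt_floor_add_one x]))
  push_cast at h₁
  have hne₁ : x + δ ≠ ⌊x⌋ + 1 := by exact_mod_cast hne (⌊x⌋ + 1)
  rw [Int.floor_eq_iff]
  constructor
  · linarith [neg_abs_le δ]
  · exact lt_of_le_of_ne (by linarith [le_abs_self δ]) hne₁

theorem floor_cfQ_add_mul {θ : ℝ} (hθ : Irrational θ) (hθ01 : θ ∈ Set.Ioo (0 : ℝ) 1)
    {m : ℕ} {r : ℤ} (hr1 : 1 ≤ r) (hr2 : r < cfQ θ (m + 1)) :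
    ⌊((cfQ θ m + r : ℤ) : ℝ) * θ⌋ = cfP θ m + ⌊(r : ℝ) * θ⌋ := by
  have hsplit : ((cfQ θ m + r : ℤ) : ℝ) * θ = (r * θ + (cfQ θ m * θ - cfP θ m)) + cfP θ m := by
    push_cast; ring
  have hirr : Irrational (((cfQ θ m + r : ℤ) : ℝ) * θ) :=
    hθ.intCast_mul (by linarith [one_le_cfQ hθ hθ01 m])
  rw [hsplit, Int.floor_add_intCast, add_comm (cfP θ m)]
  congr 1
  refine floor_add_eq_floor_of_abs_le (abs_cfQ_mul_sub_cfP_le hθ hθ01 hr1 hr2) fun s hs => ?_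
  refine hirr.ne_int (s + cfP θ m) ?_
  rw [hsplit, hs, Int.cast_add]

lemma sum_range_cfQ_add_cfQ_succ_le {θ : ℝ} (hθ : Irrational θ)
    (hθ01 : θ ∈ Set.Ioo (0 : ℝ) 1) (n k : ℕ) :
    ∑ i ∈ Finset.range k, cfQ θ (n + i) + cfQ θ (n + 1) ≤ cfQ θ (n + k + 1) := by
  induction k with
  | zero => simp
  | succ k ih =>
    have h := cfQ_add_cfQ_succ_le hθ hθ01 (n + k)
    rw [Finset.sum_range_succ, show n + (k + 1) + 1 = n + k + 2 by omega]
    linarith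

theorem floor_sum_range_cfQ_add_mul {θ : ℝ} (hθ : Irrational θ)
    (hθ01 : θ ∈ Set.Ioo (0 : ℝ) 1) {n : ℕ} {r : ℤ} (hr1 : 1 ≤ r) (hr2 : r < cfQ θ (n + 1))
    (k : ℕ) :
    ⌊((∑ i ∈ Finset.range k, cfQ θ (n + i) + r : ℤ) : ℝ) * θ⌋ =
      ∑ i ∈ Finset.range k, cfP θ (n + i) + ⌊(r : ℝ) * θ⌋ := by
  induction k with
  | zero => simp
  | succ k ih =>
    have hsum_nonneg : 0 ≤ ∑ i ∈ Finset.range k, cfQ θ (n + i) :=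
      Finset.sum_nonneg fun i _ => zero_le_one.trans (one_le_cfQ hθ hθ01 (n + i))
    have hbound := sum_range_cfQ_add_cfQ_succ_le hθ hθ01 n k
    rw [Finset.sum_range_succ, Finset.sum_range_succ, add_assoc, add_left_comm,
      floor_cfQ_add_mul hθ hθ01 (by linarith) (by linarith), ih]
    ring

theorem floor_sum_q_add_general (θ : ℝ) (hθ : Irrational θ) (hθ01 : θ ∈ Set.Ioo (0:ℝ) 1)
    (n : ℕ) (ℓ : ℕ) (r : ℤ) (hr1 : 1 ≤ r) (hr2 : r ≤ cfQ θ (n + 1) - 1) :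
    ⌊(((∑ i ∈ Finset.range (ℓ + 1), cfQ θ (n + i)) + r : ℤ) : ℝ) * θ⌋ =
      (∑ i ∈ Finset.range (ℓ + 1), cfP θ (n + i)) + ⌊(r : ℝ) * θ⌋ :=
  floor_sum_range_cfQ_add_mul hθ hθ01 hr1 (by omega) (ℓ + 1)

/-- For `θ ∈ (0,1)` irrational with convergents `pₙ/qₙ`: for `n ≥ 1`, `ℓ ≥ 0`
and `1 ≤ r ≤ q_{n+1} - 1`, one has
`⌊(q_{n+ℓ} + q_{n+ℓ-1} + ⋯ + qₙ + r)θ⌋ = p_{n+ℓ} + p_{n+ℓ-1} + ⋯ + pₙ + ⌊rθ⌋`. -/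
theorem floor_sum_q_add (θ : ℝ) (hθ : Irrational θ) (hθ01 : θ ∈ Set.Ioo (0:ℝ) 1)
    (n : ℕ) (hn : 1 ≤ n) (ℓ : ℕ) (r : ℤ) (hr1 : 1 ≤ r) (hr2 : r ≤ cfQ θ (n + 1) - 1) :
    ⌊(((∑ i ∈ Finset.range (ℓ + 1), cfQ θ (n + i)) + r : ℤ) : ℝ) * θ⌋ =
      (∑ i ∈ Finset.range (ℓ + 1), cfP θ (n + i)) + ⌊(r : ℝ) * θ⌋ :=
  floor_sum_q_add_general θ hθ hθ01 n ℓ r hr1 hr2
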